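/- (Convergence of minimizers to maximum cuts) Let {ε_k} be a sequence of positive reals with ε_k → 0, and for each k let u_k be a global minimizer of f_{ε_k}^+ over all functions V → ℝ. Then there exists a binary function u_0 : V → {−1,1} and a subsequence {u_{k'}} converging to u_0 (pointwise on V); moreover, the cut C_{u_0} induced by u_0 is a maximum cut, i.e., for every binary function v : V → {−1,1}, s(C_v) ≤ s(C_{u_0}). -/

import Mathlib

/-!
A minimizer `u` of `E + ε⁻¹ P`, with `E, P ≥ 0`, is compared with any zero `z` of the penalty `P`:
this gives `E u ≤ E z` and `P u ≤ ε E z`. For the signless Ginzburg–Landau functional the penalty is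
the double-well sum, whose zeros are the binary functions, and the constant function `1` is such a
zero, so the minimizers are bounded and have a convergent subsequence. In the limit the penalty
vanishes and the energy is minimal among binary functions. On binary functions the signless energy
is `2 ∑ ω - 4 s`, so minimal energy means maximal cut.
-/

open Filter Topology

section Penalty

variable {X : Type*} {E P : X → ℝ}

lemma penalty_le_of_le_penalized {ε : ℝ} (hε : 0 < ε) {x z : X}
    (hmin : E x + ε⁻¹ * P x ≤ E z + ε⁻¹ * P z) (hEx : 0 ≤ E x) (hz : P z = 0) :
    P x ≤ ε * E z := by
  rw [hz, mul_zero, add_zero] at hmin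
  exact (inv_mul_le_iff₀ hε).1 (by linarith)

lemma le_of_le_penalized {ε : ℝ} (hε : 0 ≤ ε) {x z : X}
    (hmin : E x + ε⁻¹ * P x ≤ E z + ε⁻¹ * P z) (hPx : 0 ≤ P x) (hz : P z = 0) :
    E x ≤ E z := by
  rw [hz, mul_zero, add_zero] at hmin
  linarith [mul_nonneg (inv_nonneg.2 hε) hPx]

theorem penalty_eq_zero_and_isMinOn_of_tendsto [TopologicalSpace X]
    (hE : Continuous E) (hP : Continuous P) (hE0 : ∀ x, 0 ≤ E x) (hP0 : ∀ x, 0 ≤ P x)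
    {ε : ℕ → ℝ} (hεpos : ∀ k, 0 < ε k) (hεlim : Tendsto ε atTop (𝓝 0))
    {u : ℕ → X} (hmin : ∀ k v, E (u k) + (ε k)⁻¹ * P (u k) ≤ E v + (ε k)⁻¹ * P v)
    {z : X} (hz : P z = 0) {x₀ : X} (hx₀ : Tendsto u atTop (𝓝 x₀)) :
    P x₀ = 0 ∧ IsMinOn E {v | P v = 0} x₀ := by
  refine ⟨le_antisymm ?_ (hP0 x₀), isMinOn_iff.2 fun v hv => ?_⟩
  · have hbound : Tendsto (fun k => ε k * E z) atTop (𝓝 0) := by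
      simpa using hεlim.mul_const (E z)
    exact le_of_tendsto_of_tendsto' ((hP.tendsto x₀).comp hx₀) hbound fun k =>
      penalty_le_of_le_penalized (hεpos k) (hmin k z) (hE0 _) hz
  · exact le_of_tendsto' ((hE.tendsto x₀).comp hx₀) fun k =>
      le_of_le_penalized (hεpos k).le (hmin k v) (hP0 _) hv

end Penalty

section SignlessGinzburgLandau

variable {ι : Type*} [Fintype ι]

noncomputable def signlessDirichlet (ω : ι → ι → ℝ) (u : ι → ℝ) : ℝ :=
  (1 / 2) * ∑ i, ∑ j, ω i j * (u i + u j) ^ 2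

def doubleWellSum (u : ι → ℝ) : ℝ :=
  ∑ i, ((u i) ^ 2 - 1) ^ 2

noncomputable def cutWeight (ω : ι → ι → ℝ) (v : ι → ℝ) : ℝ :=
  ∑ i, ∑ j, if v i = -1 ∧ v j = 1 then ω i j else 0

def IsBinary (v : ι → ℝ) : Prop :=
  ∀ i, v i = -1 ∨ v i = 1

lemma signlessDirichlet_nonneg {ω : ι → ι → ℝ} (hω : ∀ i j, 0 ≤ ω i j) (u : ι → ℝ) :
    0 ≤ signlessDirichlet ω u :=
  mul_nonneg (by norm_num) <| Finset.sum_nonneg fun i _ => Finset.sum_nonneg fun j _ =>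
    mul_nonneg (hω i j) (sq_nonneg _)

lemma continuous_signlessDirichlet (ω : ι → ι → ℝ) : Continuous (signlessDirichlet ω) := by
  unfold signlessDirichlet
  fun_prop

lemma doubleWellSum_nonneg (u : ι → ℝ) : 0 ≤ doubleWellSum u :=
  Finset.sum_nonneg fun _ _ => sq_nonneg _

lemma continuous_doubleWellSum : Continuous (doubleWellSum (ι := ι)) := by
  unfold doubleWellSum
  fun_prop

lemma doubleWellSum_eq_zero_iff {v : ι → ℝ} : doubleWellSum v = 0 ↔ IsBinary v := by
  simp only [doubleWellSum, IsBinary, Finset.sum_eq_zero_iff_of_nonneg fun _ _ => sq_nonneg _,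
    Finset.mem_univ, true_implies, pow_eq_zero_iff two_ne_zero, sub_eq_zero, sq_eq_one_iff, or_comm]

lemma abs_le_two_add_sq_sq_sub_one (x : ℝ) : |x| ≤ 2 + (x ^ 2 - 1) ^ 2 := by
  rcases le_or_gt |x| 2 with hx | hx
  · nlinarith [sq_nonneg (x ^ 2 - 1)]
  · have hsq : |x| ^ 2 = x ^ 2 := sq_abs x
    nlinarith [sq_nonneg (x ^ 2 - 1 - |x|)]

lemma isBounded_setOf_doubleWellSum_le (C : ℝ) :
    Bornology.IsBounded {u : ι → ℝ | doubleWellSum u ≤ C} := by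
  refine (Metric.isBounded_closedBall (x := 0) (r := 2 + C)).subset fun u hu => ?_
  have hterm (i : ι) : ((u i) ^ 2 - 1) ^ 2 ≤ C :=
    (Finset.single_le_sum (f := fun j => ((u j) ^ 2 - 1) ^ 2) (fun _ _ => sq_nonneg _)
      (Finset.mem_univ i)).trans hu
  rw [Metric.mem_closedBall, dist_zero_right]
  refine (pi_norm_le_iff_of_nonneg (by linarith [doubleWellSum_nonneg u, hu.out])).2 fun i => ?_
  exact (abs_le_two_add_sq_sq_sub_one (u i)).trans (by linarith [hterm i])

lemma signlessDirichlet_eq_of_isBinary {ω : ι → ι → ℝ} (hω : ∀ i j, ω i j = ω j i)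
    {v : ι → ℝ} (hv : IsBinary v) :
    signlessDirichlet ω v = 2 * ∑ i, ∑ j, ω i j - 4 * cutWeight ω v := by
  have hterm (i j : ι) : ω i j * (v i + v j) ^ 2 = 4 * ω i j
      - 4 * (if v i = -1 ∧ v j = 1 then ω i j else 0)
      - 4 * (if v j = -1 ∧ v i = 1 then ω j i else 0) := by
    rcases hv i with hi | hi <;> rcases hv j with hj | hj <;> norm_num [hi, hj, hω j i] <;> ring
  simp only [signlessDirichlet, cutWeight, hterm, Finset.sum_sub_distrib, ← Finset.mul_sum]
  rw [Finset.sum_comm (f := fun i j => if v j = -1 ∧ v i = 1 then ω j i else 0)]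
  ring

lemma cutWeight_le_of_signlessDirichlet_le {ω : ι → ι → ℝ} (hω : ∀ i j, ω i j = ω j i)
    {v w : ι → ℝ} (hv : IsBinary v) (hw : IsBinary w)
    (h : signlessDirichlet ω w ≤ signlessDirichlet ω v) : cutWeight ω v ≤ cutWeight ω w := by
  rw [signlessDirichlet_eq_of_isBinary hω hv, signlessDirichlet_eq_of_isBinary hω hw] at h
  linarith

end SignlessGinzburgLandau

theorem signlessGL_minimizers_converge_to_maxcut_general
    (n : ℕ) (ω : Fin n → Fin n → ℝ)
    (hsymm : ∀ i j, ω i j = ω j i) (hnonneg : ∀ i j, 0 ≤ ω i j)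
    (f : ℝ → (Fin n → ℝ) → ℝ)
    (hf : ∀ ε u, f ε u = (1 / 2) * ∑ i, ∑ j, ω i j * (u i + u j) ^ 2
        + (1 / ε) * ∑ i, ((u i) ^ 2 - 1) ^ 2)
    (s : (Fin n → ℝ) → ℝ)
    (hs : ∀ u : Fin n → ℝ,
      s u = ∑ i, ∑ j, if u i = -1 ∧ u j = 1 then ω i j else 0)
    (ε : ℕ → ℝ) (hεpos : ∀ k, 0 < ε k)
    (hεlim : Tendsto ε atTop (nhds 0))
    (u : ℕ → Fin n → ℝ)
    (hmin : ∀ k, ∀ v : Fin n → ℝ, f (ε k) (u k) ≤ f (ε k) v) :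
    ∃ u₀ : Fin n → ℝ, (∀ i, u₀ i = -1 ∨ u₀ i = 1) ∧
      (∃ φ : ℕ → ℕ, StrictMono φ ∧
        ∀ i, Tendsto (fun k => u (φ k) i) atTop (nhds (u₀ i))) ∧
      ∀ v : Fin n → ℝ, (∀ i, v i = -1 ∨ v i = 1) → s v ≤ s u₀ := by
  have hpenalized (k : ℕ) (v : Fin n → ℝ) : signlessDirichlet ω (u k)
      + (ε k)⁻¹ * doubleWellSum (u k) ≤ signlessDirichlet ω v + (ε k)⁻¹ * doubleWellSum v := by
    have := hmin k v
    rwa [hf, hf, one_div (ε k)] at this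
  have hone : doubleWellSum (1 : Fin n → ℝ) = 0 := by simp [doubleWellSum]
  obtain ⟨c, hc⟩ := hεlim.bddAbove_range
  have hbounded (k : ℕ) : doubleWellSum (u k) ≤ c * signlessDirichlet ω 1 :=
    (penalty_le_of_le_penalized (hεpos k) (hpenalized k 1) (signlessDirichlet_nonneg hnonneg _)
      hone).trans <| mul_le_mul_of_nonneg_right (hc ⟨k, rfl⟩) (signlessDirichlet_nonneg hnonneg _)
  obtain ⟨u₀, -, φ, hφ, hlim⟩ := tendsto_subseq_of_bounded
    (isBounded_setOf_doubleWellSum_le (c * signlessDirichlet ω 1)) (x := u) hbounded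
  obtain ⟨hbinary, hoptimal⟩ := penalty_eq_zero_and_isMinOn_of_tendsto
    (continuous_signlessDirichlet ω) continuous_doubleWellSum (signlessDirichlet_nonneg hnonneg)
    doubleWellSum_nonneg (fun k => hεpos (φ k)) (hεlim.comp hφ.tendsto_atTop)
    (fun k => hpenalized (φ k)) hone hlim
  rw [doubleWellSum_eq_zero_iff] at hbinary
  refine ⟨u₀, hbinary, ⟨φ, hφ, fun i => ((continuous_apply i).tendsto u₀).comp hlim⟩,
    fun v hv => ?_⟩
  rw [hs, hs]
  exact cutWeight_le_of_signlessDirichlet_le hsymm hv hbinary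
    (isMinOn_iff.1 hoptimal v (doubleWellSum_eq_zero_iff.2 hv))

/-- Convergence of minimizers to maximum cuts: if `ε_k ↓ 0` and each `u_k` is a global
minimizer of `f_{ε_k}⁺`, then a subsequence of `u_k` converges pointwise to a binary
function `u₀` which induces a maximum cut. -/
theorem signlessGL_minimizers_converge_to_maxcut
    (n : ℕ) (ω : Fin n → Fin n → ℝ)
    (hsymm : ∀ i j, ω i j = ω j i) (hnonneg : ∀ i j, 0 ≤ ω i j)
    (hdiag : ∀ i, ω i i = 0)
    (hdpos : ∀ i, 0 < ∑ j, ω i j)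
    (f : ℝ → (Fin n → ℝ) → ℝ)
    (hf : ∀ ε u, f ε u = (1 / 2) * ∑ i, ∑ j, ω i j * (u i + u j) ^ 2
        + (1 / ε) * ∑ i, ((u i) ^ 2 - 1) ^ 2)
    (s : (Fin n → ℝ) → ℝ)
    (hs : ∀ u : Fin n → ℝ,
      s u = ∑ i, ∑ j, if u i = -1 ∧ u j = 1 then ω i j else 0)
    (ε : ℕ → ℝ) (hεpos : ∀ k, 0 < ε k)
    (hεlim : Tendsto ε atTop (nhds 0))
    (u : ℕ → Fin n → ℝ)
    (hmin : ∀ k, ∀ v : Fin n → ℝ, f (ε k) (u k) ≤ f (ε k) v) :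
    ∃ u₀ : Fin n → ℝ, (∀ i, u₀ i = -1 ∨ u₀ i = 1) ∧
      (∃ φ : ℕ → ℕ, StrictMono φ ∧
        ∀ i, Tendsto (fun k => u (φ k) i) atTop (nhds (u₀ i))) ∧
      ∀ v : Fin n → ℝ, (∀ i, v i = -1 ∨ v i = 1) → s v ≤ s u₀ :=
  signlessGL_minimizers_converge_to_maxcut_general n ω hsymm hnonneg f hf s hs ε hεpos hεlim u hmin
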